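/- For the positive-part threshold η(u;λσ) = max(u − λσ, 0) applied to X + (σ/√δ)Z with Z ~ N(0,1) independent of X ≥ 0, P(X=0) = 1−ε, P(X = x*) = ε for fixed x* > 0: the limit as σ ↓ 0 of the derivative dΨ/dσ² equals (1/δ + λ²)ε + (1/δ + λ²)(1−ε)Φ(−λ√δ) − (λ/√δ)(1−ε)φ(−λ√δ). -/

import Mathlib

/-!
As σ ↓ 0 the Gaussian arguments split according to the atom of X. At X = x* > 0 the argument
(√δ/σ)(x* − λσ) tends to +∞, so Φ → 1 and φ → 0 there; at X = 0 it equals −λ√δ for every σ > 0,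
so those terms are constant. The limit is then read off by continuity of the arithmetic.
-/

open Filter Topology

noncomputable def gaussPhi (z : ℝ) : ℝ := Real.exp (-z ^ 2 / 2) / Real.sqrt (2 * Real.pi)

noncomputable def gaussPhiCDF (z : ℝ) : ℝ := ∫ t in Set.Iic z, gaussPhi t

open ProbabilityTheory

lemma gaussPhi_eq_gaussianPDFReal : gaussPhi = gaussianPDFReal 0 1 := by
  ext z
  simp [gaussPhi, gaussianPDFReal, div_eq_inv_mul]

lemma gaussPhiCDF_eq_cdf_gaussianReal : gaussPhiCDF = cdf (gaussianReal 0 1) := by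
  ext z
  rw [cdf_eq_real, MeasureTheory.measureReal_def, gaussianReal_apply_eq_integral _ one_ne_zero,
    ENNReal.toReal_ofReal (MeasureTheory.setIntegral_nonneg measurableSet_Iic
      fun x _ => gaussianPDFReal_nonneg 0 1 x), gaussPhiCDF, gaussPhi_eq_gaussianPDFReal]

lemma tendsto_gaussPhiCDF_atTop : Tendsto gaussPhiCDF atTop (𝓝 1) :=
  gaussPhiCDF_eq_cdf_gaussianReal ▸ tendsto_cdf_atTop _

lemma tendsto_gaussPhi_atTop : Tendsto gaussPhi atTop (𝓝 0) := by
  have : Tendsto (fun z : ℝ => -z ^ 2 / 2) atTop atBot :=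
    (tendsto_neg_atTop_atBot.comp (tendsto_pow_atTop two_ne_zero)).atBot_div_const two_pos
  have h := (Real.tendsto_exp_atBot.comp this).div_const (Real.sqrt (2 * Real.pi))
  rwa [zero_div] at h

lemma tendsto_div_mul_sub_mul_nhdsGT_zero {c x : ℝ} (hc : 0 < c) (hx : 0 < x) (l : ℝ) :
    Tendsto (fun σ : ℝ => (c / σ) * (x - l * σ)) (𝓝[>] 0) atTop := by
  have : Tendsto (fun σ : ℝ => c * x * σ⁻¹ - c * l) (𝓝[>] 0) atTop :=
    (tendsto_inv_nhdsGT_zero.const_mul_atTop (mul_pos hc hx)).atTop_add tendsto_const_nhds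
  refine this.congr' ?_
  filter_upwards [self_mem_nhdsWithin] with σ (hσ : 0 < σ)
  field_simp

theorem positive_case_deriv_limit_general (δ lam xstar ε : ℝ)
    (hδ : 0 < δ) (hx : 0 < xstar) :
    Filter.Tendsto
      (fun σ : ℝ =>
        (1 / δ + lam ^ 2) *
            ((1 - ε) * gaussPhiCDF ((Real.sqrt δ / σ) * (0 - lam * σ))
              + ε * gaussPhiCDF ((Real.sqrt δ / σ) * (xstar - lam * σ)))
          - (lam / Real.sqrt δ) *
            ((1 - ε) * gaussPhi ((Real.sqrt δ / σ) * (0 - lam * σ))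
              + ε * gaussPhi ((Real.sqrt δ / σ) * (xstar - lam * σ))))
      (nhdsWithin 0 (Set.Ioi 0))
      (nhds ((1 / δ + lam ^ 2) * ε
        + (1 / δ + lam ^ 2) * (1 - ε) * gaussPhiCDF (-(lam * Real.sqrt δ))
        - (lam / Real.sqrt δ) * (1 - ε) * gaussPhi (-(lam * Real.sqrt δ)))) := by
  have hatom_zero : ∀ᶠ σ in 𝓝[>] (0 : ℝ),
      -(lam * Real.sqrt δ) = (Real.sqrt δ / σ) * (0 - lam * σ) := by
    filter_upwards [self_mem_nhdsWithin] with σ (hσ : 0 < σ)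
    field_simp
    ring
  have hatom_xstar := tendsto_div_mul_sub_mul_nhdsGT_zero (Real.sqrt_pos.mpr hδ) hx lam
  have hCDF_zero := tendsto_const_nhds.congr' (hatom_zero.mono fun _ h => congrArg gaussPhiCDF h)
  have hPhi_zero := tendsto_const_nhds.congr' (hatom_zero.mono fun _ h => congrArg gaussPhi h)
  have hlim := (((hCDF_zero.const_mul (1 - ε)).add
      ((tendsto_gaussPhiCDF_atTop.comp hatom_xstar).const_mul ε)).const_mul (1 / δ + lam ^ 2)).sub
    (((hPhi_zero.const_mul (1 - ε)).add
      ((tendsto_gaussPhi_atTop.comp hatom_xstar).const_mul ε)).const_mul (lam / Real.sqrt δ))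
  simp only [Function.comp_def] at hlim
  convert hlim using 2
  ring

theorem positive_case_deriv_limit (δ lam xstar ε : ℝ)
    (hδ : 0 < δ) (hlam : 0 < lam) (hx : 0 < xstar) (hε : ε ∈ Set.Ioo (0:ℝ) 1) :
    Filter.Tendsto
      (fun σ : ℝ =>
        (1 / δ + lam ^ 2) *
            ((1 - ε) * gaussPhiCDF ((Real.sqrt δ / σ) * (0 - lam * σ))
              + ε * gaussPhiCDF ((Real.sqrt δ / σ) * (xstar - lam * σ)))
          - (lam / Real.sqrt δ) *
            ((1 - ε) * gaussPhi ((Real.sqrt δ / σ) * (0 - lam * σ))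
              + ε * gaussPhi ((Real.sqrt δ / σ) * (xstar - lam * σ))))
      (nhdsWithin 0 (Set.Ioi 0))
      (nhds ((1 / δ + lam ^ 2) * ε
        + (1 / δ + lam ^ 2) * (1 - ε) * gaussPhiCDF (-(lam * Real.sqrt δ))
        - (lam / Real.sqrt δ) * (1 - ε) * gaussPhi (-(lam * Real.sqrt δ)))) :=
  positive_case_deriv_limit_general δ lam xstar ε hδ hx
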